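/- arXiv:2605.10072 — 10 statements merged into one kernel-verified Lean document; each statement's English description precedes it below -/
import Mathlib

section
/- Let σ and σ' be permutations of (1,2,3), and let W, U ∈ 𝓜 be two words such that either both W and U are trunk words or both W and U are branch words. Then there exist linear automorphisms Φ and Ψ of ℝ³ such that for every X ∈ 𝓜 and every M ∈ {K,S,T}, Φ(c_M^{σ,WX}) = c_M^{σ',UX} and Ψ(g_M^{σ,WX}) = g_M^{σ',UX}. -/
/-!
Each mutation step (`cStep`, `gStep`) replaces a triple by fixed integer combinations of its
members, the combinations depending only on the letter and on whether the word read so far is a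
trunk word. Hence the steps commute with every linear map, and since `W ++ X` is a trunk word
exactly when `W` and `X` are, a linear map carrying the triple at `W` to the triple at `U`
carries the triple at `W ++ X` to the triple at `U ++ X` for every `X`. Such a map can be chosen
invertible because every triple is a basis: each step changes the determinant only by a sign.
-/

namespace Markov

/-- The ambient space ℝ³. -/
abbrev V3 : Type := Fin 3 → ℝ

/-- Standard basis vectors ẽ₁, ẽ₂, ẽ₃ (indexed by `Fin 3`). -/
noncomputable def e (i : Fin 3) : V3 := Pi.single i 1

/-- The two generating letters of the free monoid 𝓜. -/
inductive Lt
  | S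
  | T
  deriving DecidableEq

/-- Elements of the free monoid 𝓜 on `{S, T}`, as words (lists of letters
read left to right); the monoid operation is `++` and the identity is `[]`. -/
abbrev Word := List Lt

/-- A word is a trunk word iff it consists only of the letter `S`
(otherwise it is a branch word). -/
def IsTrunk (X : Word) : Prop := ∀ l ∈ X, l = Lt.S

/-- Boolean trunk test. -/
def trunkB (X : Word) : Bool := X.all (fun l => decide (l = Lt.S))

/-- One mutation step for the triple `(g_K, g_S, g_T)`; the flag `trunk`
records whether the word being extended (on the right) is a trunk word. -/
noncomputable def gStep (trunk : Bool) (l : Lt) (v : V3 × V3 × V3) :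
    V3 × V3 × V3 :=
  match l with
  | Lt.S => (2 • v.1 - v.2.1, v.1, v.2.2)
  | Lt.T =>
    if trunk then (2 • v.2.1 - v.2.2, v.2.1, v.1)
    else (2 • v.1 - v.2.2, v.1, v.2.1)

/-- Auxiliary recursion computing the g-vectors from the reversed word
(head of the list = last letter of the word). -/
noncomputable def gRev (k s t : Fin 3) : Word → V3 × V3 × V3
  | [] => (2 • e s - e k, e s, e t)
  | l :: X => gStep (trunkB X) l (gRev k s t X)

/-- The triple of modified g-vectors `(g_K^X, g_S^X, g_T^X)` for the
permutation `(k₀, s₀, t₀) = (k, s, t)` of the indices. -/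
noncomputable def g (k s t : Fin 3) (X : Word) : V3 × V3 × V3 :=
  gRev k s t X.reverse

/-- One mutation step for the triple `(c_K, c_S, c_T)`. -/
noncomputable def cStep (trunk : Bool) (l : Lt) (v : V3 × V3 × V3) :
    V3 × V3 × V3 :=
  match l with
  | Lt.S => (-v.2.1, v.1 + 2 • v.2.1, v.2.2)
  | Lt.T =>
    if trunk then (-v.2.2, v.2.1 + 2 • v.2.2, v.1)
    else (-v.2.2, v.1 + 2 • v.2.2, v.2.1)

noncomputable def cRev (k s t : Fin 3) : Word → V3 × V3 × V3
  | [] => (-(e k), e s + 2 • e k, e t)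
  | l :: X => cStep (trunkB X) l (cRev k s t X)

/-- The triple of modified c-vectors `(c_K^X, c_S^X, c_T^X)`. -/
noncomputable def c (k s t : Fin 3) (X : Word) : V3 × V3 × V3 :=
  cRev k s t X.reverse

/-- `g_F^X = g_S^X + g_T^X − g_K^X`. -/
noncomputable def gF (k s t : Fin 3) (X : Word) : V3 :=
  (g k s t X).2.1 + (g k s t X).2.2 - (g k s t X).1

/-- `v_SK^X = g_K^X − g_S^X`. -/
noncomputable def vSK (k s t : Fin 3) (X : Word) : V3 :=
  (g k s t X).1 - (g k s t X).2.1

/-- `v_TK^X = g_K^X − g_T^X`. -/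
noncomputable def vTK (k s t : Fin 3) (X : Word) : V3 :=
  (g k s t X).1 - (g k s t X).2.2

/-- `c_F^X = c_K^X + c_S^X + c_T^X`. -/
noncomputable def cF (k s t : Fin 3) (X : Word) : V3 :=
  (c k s t X).1 + (c k s t X).2.1 + (c k s t X).2.2

/-- `x_SK^X = c_K^X + c_S^X`. -/
noncomputable def xSK (k s t : Fin 3) (X : Word) : V3 :=
  (c k s t X).1 + (c k s t X).2.1

/-- `x_TK^X = −(c_K^X + c_T^X)`. -/
noncomputable def xTK (k s t : Fin 3) (X : Word) : V3 :=
  -((c k s t X).1 + (c k s t X).2.2)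

/-- Closed cone spanned by two vectors. -/
def C2 (v1 v2 : V3) : Set V3 :=
  {x | ∃ la lb : ℝ, 0 ≤ la ∧ 0 ≤ lb ∧ x = la • v1 + lb • v2}

/-- Relatively open cone spanned by two vectors. -/
def C2o (v1 v2 : V3) : Set V3 :=
  {x | ∃ la lb : ℝ, 0 < la ∧ 0 < lb ∧ x = la • v1 + lb • v2}

/-- Closed cone spanned by three vectors. -/
def C3 (v1 v2 v3 : V3) : Set V3 :=
  {x | ∃ la lb lc : ℝ, 0 ≤ la ∧ 0 ≤ lb ∧ 0 ≤ lc ∧ x = la • v1 + lb • v2 + lc • v3}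

/-- Relatively open cone spanned by four vectors. -/
def C4o (v1 v2 v3 v4 : V3) : Set V3 :=
  {x | ∃ la lb lc ld : ℝ, 0 < la ∧ 0 < lb ∧ 0 < lc ∧ 0 < ld ∧
    x = la • v1 + lb • v2 + lc • v3 + ld • v4}

/-- The set `U_∘^X = C°(g_S^X, g_T^X, v_SK^X, v_TK^X)`. -/
noncomputable def Uo (k s t : Fin 3) (X : Word) : Set V3 :=
  C4o (g k s t X).2.1 (g k s t X).2.2 (vSK k s t X) (vTK k s t X)

/-- The set `U^W = U_∘^W ∪ C(g_S^W, g_T^W)`. -/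
noncomputable def Uset (k s t : Fin 3) (W : Word) : Set V3 :=
  Uo k s t W ∪ C2 (g k s t W).2.1 (g k s t W).2.2

/-- Recursion step for the Calkin–Wilf-type coefficients `q`. -/
def qstep (l : Lt) (p : ℤ × ℤ) : ℤ × ℤ :=
  match l with
  | Lt.S => (p.1 + p.2, p.2)
  | Lt.T => (p.2, p.1 + p.2)

/-- `qfun init X` : the pair obtained from `init` by the recursion
`q^{SX} = (a+b, b)`, `q^{TX} = (b, a+b)` (letters prepended). -/
def qfun (init : ℤ × ℤ) : Word → ℤ × ℤ
  | [] => init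
  | l :: X => qstep l (qfun init X)

/-- Recursion step for the coefficients `p`. -/
def pstep (l : Lt) (p : ℤ × ℤ) : ℤ × ℤ :=
  match l with
  | Lt.S => (p.1 + p.2, p.2)
  | Lt.T => (-p.2, -p.1 - p.2)

/-- `pfun init X` : the pair obtained from `init` by the recursion
`p^{SX} = (a+b, b)`, `p^{TX} = (−b, −a−b)` (letters prepended). -/
def pfun (init : ℤ × ℤ) : Word → ℤ × ℤ
  | [] => init
  | l :: X => pstep l (pfun init X)

/-- The three index data `σ₁ = (1,3,2)`, `σ₂ = (2,1,3)`, `σ₃ = (3,2,1)`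
(written with indices `0,1,2` instead of `1,2,3`). -/
def sig : Fin 3 → Fin 3 × Fin 3 × Fin 3 :=
  ![(0, 2, 1), (1, 0, 2), (2, 1, 0)]

/-- Modified g-vectors for the `i`-th subtree of the Markov quiver. -/
noncomputable def gM (i : Fin 3) (X : Word) : V3 × V3 × V3 :=
  g (sig i).1 (sig i).2.1 (sig i).2.2 X

/-- `𝔤ᵢ = ẽ_{s₀(i)} + ẽ_{t₀(i)} − ẽ_{k₀(i)}`. -/
noncomputable def giFrak (i : Fin 3) : V3 :=
  e (sig i).2.1 + e (sig i).2.2 - e (sig i).1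

/-- The set `𝔊ᵢ` of modified g-vectors in the `i`-th subtree. -/
noncomputable def Gset (i : Fin 3) : Set V3 :=
  {v | ∃ a b : ℤ, 1 ≤ a ∧ 1 ≤ b ∧ Int.gcd a b = 1 ∧
      v = giFrak i + (a : ℝ) • (e (sig i).1 - e (sig i).2.2) +
        (b : ℝ) • (e (sig i).2.1 - e (sig i).1)} ∪
    {e (sig i).2.1}

/-- The support `𝒮` of the G-fan of the Markov quiver. -/
noncomputable def Supp : Set V3 :=
  C3 (e 0) (e 1) (e 2) ∪
    ⋃ (i : Fin 3), ⋃ (X : Word), C3 (gM i X).1 (gM i X).2.1 (gM i X).2.2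

/-- The half space `V = {x : x₁+x₂+x₃ > 0} ∪ {0}`. -/
def Vhalf : Set V3 := {x | 0 < x 0 + x 1 + x 2} ∪ {0}

theorem exists_linearEquiv_map_rows {K n : Type*} [Field K] [Fintype n] [DecidableEq n]
    {A B : Matrix n n K} (hA : A.det ≠ 0) (hB : B.det ≠ 0) :
    ∃ Φ : (n → K) ≃ₗ[K] (n → K), ∀ i, Φ (A i) = B i := by
  have hcard : Fintype.card n = Module.finrank K (n → K) :=
    (Module.finrank_fintype_fun_eq_card K).symm
  let bA := basisOfLinearIndependentOfCardEqFinrank' _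
    (Matrix.linearIndependent_rows_of_det_ne_zero hA) hcard
  let bB := basisOfLinearIndependentOfCardEqFinrank' _
    (Matrix.linearIndependent_rows_of_det_ne_zero hB) hcard
  refine ⟨bA.equiv bB (Equiv.refl n), fun i => ?_⟩
  simpa [bA, bB] using bA.equiv_apply i bB (Equiv.refl n)

def mapTriple (f : V3 →ₗ[ℝ] V3) : V3 × V3 × V3 → V3 × V3 × V3 :=
  Prod.map f (Prod.map f f)

def tripleMatrix (v : V3 × V3 × V3) : Matrix (Fin 3) (Fin 3) ℝ := Matrix.of ![v.1, v.2.1, v.2.2]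

theorem exists_mapTriple_eq {v w : V3 × V3 × V3} (hv : (tripleMatrix v).det ≠ 0)
    (hw : (tripleMatrix w).det ≠ 0) : ∃ Φ : V3 ≃ₗ[ℝ] V3, mapTriple Φ v = w := by
  obtain ⟨Φ, hΦ⟩ := exists_linearEquiv_map_rows hv hw
  exact ⟨Φ, Prod.ext (hΦ 0) (Prod.ext (hΦ 1) (hΦ 2))⟩

lemma trunkB_append (X Y : Word) : trunkB (X ++ Y) = (trunkB X && trunkB Y) :=
  List.all_append

lemma trunkB_eq_true_iff (X : Word) : trunkB X = true ↔ IsTrunk X := by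
  simp [IsTrunk, trunkB]

section Recursion

variable {k s t : Fin 3}

-- The initial triples are themselves one `S`-step away from the standard triple `(e s, e k, e t)`.
lemma c_nil : c k s t [] = cStep true .S (e s, e k, e t) := rfl

lemma g_nil : g k s t [] = gStep true .S (e s, e k, e t) := rfl

lemma c_append_singleton (X : Word) (l : Lt) :
    c k s t (X ++ [l]) = cStep (trunkB X) l (c k s t X) := by
  simp [c, cRev, trunkB]

lemma g_append_singleton (X : Word) (l : Lt) :
    g k s t (X ++ [l]) = gStep (trunkB X) l (g k s t X) := by
  simp [g, gRev, trunkB]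

end Recursion

section Equivariance

variable (f : V3 →ₗ[ℝ] V3) (b : Bool) (l : Lt) (v : V3 × V3 × V3)

lemma mapTriple_cStep : mapTriple f (cStep b l v) = cStep b l (mapTriple f v) := by
  cases l <;> cases b <;> simp [mapTriple, cStep, -nsmul_eq_mul]

lemma mapTriple_gStep : mapTriple f (gStep b l v) = gStep b l (mapTriple f v) := by
  cases l <;> cases b <;> simp [mapTriple, gStep, -nsmul_eq_mul]

end Equivariance

section Transport

variable {k s t k' s' t' : Fin 3} {f : V3 →ₗ[ℝ] V3} {W U : Word}

lemma mapTriple_c_append (hWU : trunkB W = trunkB U)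
    (h : mapTriple f (c k s t W) = c k' s' t' U) (X : Word) :
    mapTriple f (c k s t (W ++ X)) = c k' s' t' (U ++ X) := by
  induction X using List.reverseRecOn with
  | nil => simpa using h
  | append_singleton X l ih =>
    simp only [← List.append_assoc, c_append_singleton, mapTriple_cStep, ih, trunkB_append, hWU]

lemma mapTriple_g_append (hWU : trunkB W = trunkB U)
    (h : mapTriple f (g k s t W) = g k' s' t' U) (X : Word) :
    mapTriple f (g k s t (W ++ X)) = g k' s' t' (U ++ X) := by
  induction X using List.reverseRecOn with
  | nil => simpa using h
  | append_singleton X l ih =>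
    simp only [← List.append_assoc, g_append_singleton, mapTriple_gStep, ih, trunkB_append, hWU]

end Transport

section Determinant

open Matrix

lemma det_tripleMatrix_cStep (b : Bool) (l : Lt) (v : V3 × V3 × V3) :
    (tripleMatrix (cStep b l v)).det = (tripleMatrix v).det ∨
      (tripleMatrix (cStep b l v)).det = -(tripleMatrix v).det := by
  cases l <;> cases b <;> [left; left; right; left] <;>
    simp [cStep, tripleMatrix, det_fin_three] <;> ring

lemma det_tripleMatrix_gStep (b : Bool) (l : Lt) (v : V3 × V3 × V3) :
    (tripleMatrix (gStep b l v)).det = (tripleMatrix v).det ∨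
      (tripleMatrix (gStep b l v)).det = -(tripleMatrix v).det := by
  cases l <;> cases b <;> [left; left; right; left] <;>
    simp [gStep, tripleMatrix, det_fin_three] <;> ring

lemma det_tripleMatrix_cStep_ne_zero {v : V3 × V3 × V3} (b : Bool) (l : Lt)
    (hv : (tripleMatrix v).det ≠ 0) : (tripleMatrix (cStep b l v)).det ≠ 0 := by
  rcases det_tripleMatrix_cStep b l v with h | h <;> simpa [h] using hv

lemma det_tripleMatrix_gStep_ne_zero {v : V3 × V3 × V3} (b : Bool) (l : Lt)
    (hv : (tripleMatrix v).det ≠ 0) : (tripleMatrix (gStep b l v)).det ≠ 0 := by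
  rcases det_tripleMatrix_gStep b l v with h | h <;> simpa [h] using hv

variable {k s t : Fin 3} (hks : k ≠ s) (hkt : k ≠ t) (hst : s ≠ t)
include hks hkt hst

lemma det_tripleMatrix_e_ne_zero : (tripleMatrix (e s, e k, e t)).det ≠ 0 := by
  fin_cases k <;> fin_cases s <;> fin_cases t <;> simp_all [tripleMatrix, det_fin_three, e]

lemma det_tripleMatrix_c_ne_zero (X : Word) : (tripleMatrix (c k s t X)).det ≠ 0 := by
  induction X using List.reverseRecOn with
  | nil =>
    rw [c_nil]
    exact det_tripleMatrix_cStep_ne_zero _ _ (det_tripleMatrix_e_ne_zero hks hkt hst)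
  | append_singleton X l ih =>
    rw [c_append_singleton]
    exact det_tripleMatrix_cStep_ne_zero _ _ ih

lemma det_tripleMatrix_g_ne_zero (X : Word) : (tripleMatrix (g k s t X)).det ≠ 0 := by
  induction X using List.reverseRecOn with
  | nil =>
    rw [g_nil]
    exact det_tripleMatrix_gStep_ne_zero _ _ (det_tripleMatrix_e_ne_zero hks hkt hst)
  | append_singleton X l ih =>
    rw [g_append_singleton]
    exact det_tripleMatrix_gStep_ne_zero _ _ ih

end Determinant

/-- fractal structure of the modified C- and G-patterns. -/
theorem stmt_0 (k s t k' s' t' : Fin 3)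
    (hks : k ≠ s) (hkt : k ≠ t) (hst : s ≠ t)
    (hks' : k' ≠ s') (hkt' : k' ≠ t') (hst' : s' ≠ t')
    (W U : Word)
    (hWU : (IsTrunk W ∧ IsTrunk U) ∨ (¬ IsTrunk W ∧ ¬ IsTrunk U)) :
    ∃ (Φ : V3 ≃ₗ[ℝ] V3) (Ψ : V3 ≃ₗ[ℝ] V3), ∀ X : Word,
      Φ ((c k s t (W ++ X)).1) = (c k' s' t' (U ++ X)).1 ∧
      Φ ((c k s t (W ++ X)).2.1) = (c k' s' t' (U ++ X)).2.1 ∧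
      Φ ((c k s t (W ++ X)).2.2) = (c k' s' t' (U ++ X)).2.2 ∧
      Ψ ((g k s t (W ++ X)).1) = (g k' s' t' (U ++ X)).1 ∧
      Ψ ((g k s t (W ++ X)).2.1) = (g k' s' t' (U ++ X)).2.1 ∧
      Ψ ((g k s t (W ++ X)).2.2) = (g k' s' t' (U ++ X)).2.2 := by
  have htrunk : trunkB W = trunkB U := by
    rw [Bool.eq_iff_iff, trunkB_eq_true_iff, trunkB_eq_true_iff]
    tauto
  obtain ⟨Φ, hΦ⟩ := exists_mapTriple_eq (det_tripleMatrix_c_ne_zero hks hkt hst W)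
    (det_tripleMatrix_c_ne_zero hks' hkt' hst' U)
  obtain ⟨Ψ, hΨ⟩ := exists_mapTriple_eq (det_tripleMatrix_g_ne_zero hks hkt hst W)
    (det_tripleMatrix_g_ne_zero hks' hkt' hst' U)
  refine ⟨Φ, Ψ, fun X => ?_⟩
  have hc := mapTriple_c_append htrunk hΦ X
  have hg := mapTriple_g_append htrunk hΨ X
  simp only [mapTriple, Prod.map, Prod.ext_iff, LinearEquiv.coe_coe] at hc hg
  exact ⟨hc.1, hc.2.1, hc.2.2, hg.1, hg.2.1, hg.2.2⟩

end Markov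
end

section
/- For every n ≥ 0 (writing Sⁿ for the word consisting of n letters S): c_F^{Sⁿ} = ẽ_{k₀} + ẽ_{s₀} + ẽ_{t₀}, x_SK^{Sⁿ} = ẽ_{k₀} + ẽ_{s₀}, x_TK^{Sⁿ} = (ẽ_{k₀} − ẽ_{t₀}) + n(ẽ_{k₀} + ẽ_{s₀}), g_F^{Sⁿ} = ẽ_{k₀} + ẽ_{t₀} − ẽ_{s₀}, v_SK^{Sⁿ} = ẽ_{s₀} − ẽ_{k₀}, and v_TK^{Sⁿ} = (ẽ_{s₀} − ẽ_{t₀}) + (n+1)(ẽ_{s₀} − ẽ_{k₀}). -/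
namespace Markov

/-
Appending the letter `S` changes neither `c_F`, `x_SK` nor `g_F`, `v_SK`, while it adds `x_SK` to
`x_TK` and `v_SK` to `v_TK`; this holds for every word, trunk or branch. Along the trunk `Sⁿ` the
first four vectors therefore keep their values at the empty word, and the last two grow linearly
in `n`.
-/

section AppendS

variable (k s t : Fin 3) (X : Word)

theorem c_append_S :
    c k s t (X ++ [Lt.S]) =
      (-(c k s t X).2.1, (c k s t X).1 + 2 • (c k s t X).2.1, (c k s t X).2.2) := by
  simp only [c, List.reverse_append, List.reverse_singleton, List.singleton_append, cRev, cStep]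

theorem g_append_S :
    g k s t (X ++ [Lt.S]) =
      (2 • (g k s t X).1 - (g k s t X).2.1, (g k s t X).1, (g k s t X).2.2) := by
  simp only [g, List.reverse_append, List.reverse_singleton, List.singleton_append, gRev, gStep]

theorem cF_append_S : cF k s t (X ++ [Lt.S]) = cF k s t X := by
  simp only [cF, c_append_S]; module

theorem xSK_append_S : xSK k s t (X ++ [Lt.S]) = xSK k s t X := by
  simp only [xSK, c_append_S]; module

theorem xTK_append_S : xTK k s t (X ++ [Lt.S]) = xTK k s t X + xSK k s t X := by
  simp only [xTK, xSK, c_append_S]; module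

theorem gF_append_S : gF k s t (X ++ [Lt.S]) = gF k s t X := by
  simp only [gF, g_append_S]; module

theorem vSK_append_S : vSK k s t (X ++ [Lt.S]) = vSK k s t X := by
  simp only [vSK, g_append_S]; module

theorem vTK_append_S : vTK k s t (X ++ [Lt.S]) = vTK k s t X + vSK k s t X := by
  simp only [vTK, vSK, g_append_S]; module

end AppendS

theorem apply_replicate_S_eq_add_nsmul {M : Type*} [AddMonoid M] (f : Word → M) (d : M)
    (h : ∀ m, f (List.replicate m Lt.S ++ [Lt.S]) = f (List.replicate m Lt.S) + d) (n : ℕ) :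
    f (List.replicate n Lt.S) = f [] + n • d := by
  induction n with
  | zero => simp
  | succ n ih => rw [List.replicate_succ', h, ih, succ_nsmul, add_assoc]

theorem apply_replicate_S_eq_apply_nil {β : Type*} (f : Word → β)
    (h : ∀ X, f (X ++ [Lt.S]) = f X) (n : ℕ) :
    f (List.replicate n Lt.S) = f [] := by
  induction n with
  | zero => rfl
  | succ n ih => rw [List.replicate_succ', h, ih]

theorem xSK_replicate_S (k s t : Fin 3) (n : ℕ) :
    xSK k s t (List.replicate n Lt.S) = e k + e s := by
  rw [apply_replicate_S_eq_apply_nil _ (xSK_append_S k s t)]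
  simp only [xSK, c, List.reverse_nil, cRev]; module

theorem vSK_replicate_S (k s t : Fin 3) (n : ℕ) :
    vSK k s t (List.replicate n Lt.S) = e s - e k := by
  rw [apply_replicate_S_eq_apply_nil _ (vSK_append_S k s t)]
  simp only [vSK, g, List.reverse_nil, gRev]; module

theorem stmt_3_general (k s t : Fin 3)
    (n : ℕ) :
    cF k s t (List.replicate n Lt.S) = e k + e s + e t ∧
    xSK k s t (List.replicate n Lt.S) = e k + e s ∧
    xTK k s t (List.replicate n Lt.S) = (e k - e t) + n • (e k + e s) ∧
    gF k s t (List.replicate n Lt.S) = e k + e t - e s ∧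
    vSK k s t (List.replicate n Lt.S) = e s - e k ∧
    vTK k s t (List.replicate n Lt.S) = (e s - e t) + (n + 1) • (e s - e k) := by
  refine ⟨?_, xSK_replicate_S k s t n, ?_, ?_, vSK_replicate_S k s t n, ?_⟩
  · rw [apply_replicate_S_eq_apply_nil _ (cF_append_S k s t)]
    simp only [cF, c, List.reverse_nil, cRev]; module
  · rw [apply_replicate_S_eq_add_nsmul (xTK k s t) (e k + e s)
      (fun m => by rw [xTK_append_S, xSK_replicate_S]) n]
    simp only [xTK, c, List.reverse_nil, cRev]; module
  · rw [apply_replicate_S_eq_apply_nil _ (gF_append_S k s t)]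
    simp only [gF, g, List.reverse_nil, gRev]; module
  · rw [apply_replicate_S_eq_add_nsmul (vTK k s t) (e s - e k)
      (fun m => by rw [vTK_append_S, vSK_replicate_S]) n]
    simp only [vTK, g, List.reverse_nil, gRev]; module

/-- c- and g-vectors on the trunk `Sⁿ`. -/
theorem stmt_3 (k s t : Fin 3) (hks : k ≠ s) (hkt : k ≠ t) (hst : s ≠ t)
    (n : ℕ) :
    cF k s t (List.replicate n Lt.S) = e k + e s + e t ∧
    xSK k s t (List.replicate n Lt.S) = e k + e s ∧
    xTK k s t (List.replicate n Lt.S) = (e k - e t) + n • (e k + e s) ∧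
    gF k s t (List.replicate n Lt.S) = e k + e t - e s ∧
    vSK k s t (List.replicate n Lt.S) = e s - e k ∧
    vTK k s t (List.replicate n Lt.S) = (e s - e t) + (n + 1) • (e s - e k) :=
  stmt_3_general k s t n

end Markov
end

section
/- For every n ≥ 0 (writing SⁿT for the concatenation of n letters S followed by one letter T): c_F^{SⁿT} = ẽ_{k₀} + ẽ_{s₀} + ẽ_{t₀}, x_SK^{SⁿT} = (ẽ_{k₀} + ẽ_{t₀}) + (n+1)(ẽ_{k₀} + ẽ_{s₀}), x_TK^{SⁿT} = (ẽ_{k₀} + ẽ_{t₀}) + n(ẽ_{k₀} + ẽ_{s₀}), g_F^{SⁿT} = ẽ_{s₀} + ẽ_{t₀} − ẽ_{k₀}, v_SK^{SⁿT} = (ẽ_{k₀} − ẽ_{t₀}) + (n+1)(ẽ_{s₀} − ẽ_{k₀}), and v_TK^{SⁿT} = (ẽ_{k₀} − ẽ_{t₀}) + n(ẽ_{s₀} − ẽ_{k₀}). -/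
namespace Markov

lemma trunkB_repl (n : ℕ) : trunkB (List.replicate n Lt.S) = true := by
  simp [trunkB, List.all_eq_true]

lemma cRev_repl (k s t : Fin 3) (n : ℕ) :
    cRev k s t (List.replicate n Lt.S) =
      (-(((n : ℝ) + 1) • e k + (n : ℝ) • e s),
        ((n : ℝ) + 2) • e k + ((n : ℝ) + 1) • e s, e t) := by
  induction n with
  | zero =>
    simp only [List.replicate, cRev]
    refine Prod.ext ?_ (Prod.ext ?_ rfl) <;> push_cast <;> module
  | succ m ih =>
    rw [List.replicate_succ]
    show cStep (trunkB (List.replicate m Lt.S)) Lt.S (cRev k s t (List.replicate m Lt.S)) = _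
    rw [trunkB_repl, ih]
    simp only [cStep]
    refine Prod.ext ?_ (Prod.ext ?_ rfl) <;> push_cast <;> module

lemma gRev_repl (k s t : Fin 3) (n : ℕ) :
    gRev k s t (List.replicate n Lt.S) =
      (((n : ℝ) + 2) • e s - ((n : ℝ) + 1) • e k,
        ((n : ℝ) + 1) • e s - (n : ℝ) • e k, e t) := by
  induction n with
  | zero =>
    simp only [List.replicate, gRev]
    refine Prod.ext ?_ (Prod.ext ?_ rfl) <;> push_cast <;> module
  | succ m ih =>
    rw [List.replicate_succ]
    show gStep (trunkB (List.replicate m Lt.S)) Lt.S (gRev k s t (List.replicate m Lt.S)) = _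
    rw [trunkB_repl, ih]
    simp only [gStep]
    refine Prod.ext ?_ (Prod.ext ?_ rfl) <;> push_cast <;> module

lemma c_snT (k s t : Fin 3) (n : ℕ) :
    c k s t (List.replicate n Lt.S ++ [Lt.T]) =
      (-(e t), (((n : ℝ) + 2) • e k + ((n : ℝ) + 1) • e s) + 2 • e t,
        -(((n : ℝ) + 1) • e k + (n : ℝ) • e s)) := by
  unfold c
  rw [List.reverse_append, List.reverse_replicate]
  show cStep (trunkB (List.replicate n Lt.S)) Lt.T (cRev k s t (List.replicate n Lt.S)) = _
  rw [trunkB_repl, cRev_repl]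
  simp [cStep]

lemma g_snT (k s t : Fin 3) (n : ℕ) :
    g k s t (List.replicate n Lt.S ++ [Lt.T]) =
      (2 • (((n : ℝ) + 1) • e s - (n : ℝ) • e k) - e t,
        ((n : ℝ) + 1) • e s - (n : ℝ) • e k,
        ((n : ℝ) + 2) • e s - ((n : ℝ) + 1) • e k) := by
  unfold g
  rw [List.reverse_append, List.reverse_replicate]
  show gStep (trunkB (List.replicate n Lt.S)) Lt.T (gRev k s t (List.replicate n Lt.S)) = _
  rw [trunkB_repl, gRev_repl]
  simp [gStep]

/-- c- and g-vectors at the roots `SⁿT` of maximal branches. -/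
theorem stmt_4 (k s t : Fin 3) (hks : k ≠ s) (hkt : k ≠ t) (hst : s ≠ t)
    (n : ℕ) :
    cF k s t (List.replicate n Lt.S ++ [Lt.T]) = e k + e s + e t ∧
    xSK k s t (List.replicate n Lt.S ++ [Lt.T]) =
      (e k + e t) + (n + 1) • (e k + e s) ∧
    xTK k s t (List.replicate n Lt.S ++ [Lt.T]) = (e k + e t) + n • (e k + e s) ∧
    gF k s t (List.replicate n Lt.S ++ [Lt.T]) = e s + e t - e k ∧
    vSK k s t (List.replicate n Lt.S ++ [Lt.T]) =
      (e k - e t) + (n + 1) • (e s - e k) ∧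
    vTK k s t (List.replicate n Lt.S ++ [Lt.T]) = (e k - e t) + n • (e s - e k) := by
  unfold cF xSK xTK gF vSK vTK
  rw [c_snT, g_snT]
  simp only [← Nat.cast_smul_eq_nsmul ℝ]
  refine ⟨?_, ?_, ?_, ?_, ?_, ?_⟩ <;> push_cast <;> module

end Markov
end

section
/- Let Ψ be the linear endomorphism of ℝ³ determined by Ψ(ẽ_{k₀}) = ẽ_{s₀}, Ψ(ẽ_{s₀}) = −ẽ_{k₀} + 2ẽ_{s₀}, Ψ(ẽ_{t₀}) = ẽ_{t₀}, and let Φ be the linear endomorphism determined by Φ(ẽ_{k₀}) = 2ẽ_{k₀} + ẽ_{s₀}, Φ(ẽ_{s₀}) = −ẽ_{k₀}, Φ(ẽ_{t₀}) = ẽ_{t₀}. Then for every X ∈ 𝓜 and every M ∈ {K,S,T}: Φ(c_M^X) = c_M^{SX} and Ψ(g_M^X) = g_M^{SX} (where SX denotes the word X with one letter S prepended). -/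
namespace Markov

private lemma gRev_append_S (k s t : Fin 3)
    (Ψ : V3 →ₗ[ℝ] V3)
    (hΨk : Ψ (e k) = e s) (hΨs : Ψ (e s) = -(e k) + 2 • e s)
    (hΨt : Ψ (e t) = e t) :
    ∀ L : Word,
      Ψ ((gRev k s t L).1) = (gRev k s t (L ++ [Lt.S])).1 ∧
      Ψ ((gRev k s t L).2.1) = (gRev k s t (L ++ [Lt.S])).2.1 ∧
      Ψ ((gRev k s t L).2.2) = (gRev k s t (L ++ [Lt.S])).2.2 := by
  intro L
  induction L with
  | nil =>
    simp only [List.nil_append, gRev, gStep, map_sub, map_nsmul, hΨk, hΨs, hΨt]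
    and_intros <;> first | module | trivial
  | cons l X ih =>
    obtain ⟨ih1, ih2, ih3⟩ := ih
    have htr : trunkB (X ++ [Lt.S]) = trunkB X := by
      simp [trunkB, List.all_append]
    cases l with
    | S =>
      simp only [List.cons_append, List.append_eq, gRev, gStep, map_sub, map_nsmul,
        ih1, ih2, ih3, htr]
      and_intros <;> trivial
    | T =>
      simp only [List.cons_append, List.append_eq, gRev, gStep, htr] at *
      cases h : trunkB X <;>
        simp only [h, if_true, if_false, Bool.false_eq_true, map_sub, map_nsmul,
          ih1, ih2, ih3] <;> and_intros <;> trivial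

private lemma cRev_append_S (k s t : Fin 3)
    (Φ : V3 →ₗ[ℝ] V3)
    (hΦk : Φ (e k) = 2 • e k + e s) (hΦs : Φ (e s) = -(e k))
    (hΦt : Φ (e t) = e t) :
    ∀ L : Word,
      Φ ((cRev k s t L).1) = (cRev k s t (L ++ [Lt.S])).1 ∧
      Φ ((cRev k s t L).2.1) = (cRev k s t (L ++ [Lt.S])).2.1 ∧
      Φ ((cRev k s t L).2.2) = (cRev k s t (L ++ [Lt.S])).2.2 := by
  intro L
  induction L with
  | nil =>
    simp only [List.nil_append, cRev, cStep, map_neg, map_add, map_nsmul, hΦk, hΦs, hΦt]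
    and_intros <;> first | module | trivial
  | cons l X ih =>
    obtain ⟨ih1, ih2, ih3⟩ := ih
    have htr : trunkB (X ++ [Lt.S]) = trunkB X := by
      simp [trunkB, List.all_append]
    cases l with
    | S =>
      simp only [List.cons_append, List.append_eq, cRev, cStep, map_neg, map_add,
        map_nsmul, ih1, ih2, ih3, htr]
      and_intros <;> trivial
    | T =>
      simp only [List.cons_append, List.append_eq, cRev, cStep, htr] at *
      cases h : trunkB X <;>
        simp only [h, if_true, if_false, Bool.false_eq_true, map_neg, map_add, map_nsmul,
          ih1, ih2, ih3] <;> and_intros <;> trivial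

/-- the linear maps realizing one prepended `S`-mutation. -/
theorem stmt_6 (k s t : Fin 3) (hks : k ≠ s) (hkt : k ≠ t) (hst : s ≠ t)
    (Ψ Φ : V3 →ₗ[ℝ] V3)
    (hΨk : Ψ (e k) = e s) (hΨs : Ψ (e s) = -(e k) + 2 • e s)
    (hΨt : Ψ (e t) = e t)
    (hΦk : Φ (e k) = 2 • e k + e s) (hΦs : Φ (e s) = -(e k))
    (hΦt : Φ (e t) = e t) :
    ∀ X : Word,
      Φ ((c k s t X).1) = (c k s t (Lt.S :: X)).1 ∧
      Φ ((c k s t X).2.1) = (c k s t (Lt.S :: X)).2.1 ∧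
      Φ ((c k s t X).2.2) = (c k s t (Lt.S :: X)).2.2 ∧
      Ψ ((g k s t X).1) = (g k s t (Lt.S :: X)).1 ∧
      Ψ ((g k s t X).2.1) = (g k s t (Lt.S :: X)).2.1 ∧
      Ψ ((g k s t X).2.2) = (g k s t (Lt.S :: X)).2.2 := by
  intro X
  have hrev : (Lt.S :: X).reverse = X.reverse ++ [Lt.S] := by simp
  obtain ⟨hc1, hc2, hc3⟩ := cRev_append_S k s t Φ hΦk hΦs hΦt X.reverse
  obtain ⟨hg1, hg2, hg3⟩ := gRev_append_S k s t Ψ hΨk hΨs hΨt X.reverse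
  simp only [c, g, hrev]
  exact ⟨hc1, hc2, hc3, hg1, hg2, hg3⟩

end Markov
end

section
/- Let W ∈ 𝓜 be a branch word. Define pairs of integers q_M^X = (q_{M;S}^X, q_{M;T}^X) for M ∈ {K,S,T} and X ∈ 𝓜 by the initial conditions q_K^1 = (1,1), q_S^1 = (0,1), q_T^1 = (1,0), and the recursion (for all X ∈ 𝓜, writing (a,b) = q_M^X): q_M^{SX} = (a+b, b) and q_M^{TX} = (b, a+b) (letters prepended). Then for every X ∈ 𝓜 and every M ∈ {K,S,T}: g_M^{WX} = 𝔤 + q_{M;S}^X · v_SK^W + q_{M;T}^X · v_TK^W, where 𝔤 = ẽ_{s₀} + ẽ_{t₀} − ẽ_{k₀}. -/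
namespace Markov

lemma trunkB_reverse (X : Word) : trunkB X.reverse = trunkB X := by
  simp [trunkB, List.all_reverse]

lemma g_append_single (k s t : Fin 3) (W : Word) (l : Lt) :
    g k s t (W ++ [l]) = gStep (trunkB W) l (g k s t W) := by
  simp [g, gRev, trunkB_reverse]

lemma trunkB_false (W : Word) (hW : ¬ IsTrunk W) : trunkB W = false := by
  rw [← Bool.not_eq_true, trunkB, List.all_eq_true]
  simpa [IsTrunk] using hW

lemma gRev_trunk (k s t : Fin 3) (R : Word) (hR : trunkB R = true) :
    (gRev k s t R).1 - (gRev k s t R).2.1 = e s - e k ∧ (gRev k s t R).2.2 = e t := by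
  induction R with
  | nil => exact ⟨by show 2 • e s - e k - e s = e s - e k; module, rfl⟩
  | cons l R ih =>
    have hl : l = Lt.S := by
      cases l
      · rfl
      · exfalso; rw [trunkB, List.all_cons] at hR; simp at hR
    have hR' : trunkB R = true := by
      subst hl
      rw [trunkB, List.all_eq_true]
      intro x hx
      rw [trunkB, List.all_eq_true] at hR
      exact hR x (List.mem_cons_of_mem _ hx)
    obtain ⟨h1, h2⟩ := ih hR'
    subst hl
    refine ⟨?_, by simpa [gRev, gStep] using h2⟩
    simp only [gRev, gStep]
    rw [sub_eq_iff_eq_add.mp h1]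
    module

lemma gRev_gF (k s t : Fin 3) (R : Word) (hR : trunkB R = false) :
    (gRev k s t R).2.1 + (gRev k s t R).2.2 - (gRev k s t R).1
      = e s + e t - e k := by
  induction R with
  | nil => simp [trunkB] at hR
  | cons l R ih =>
    rcases h : trunkB R with _ | _
    · have := ih h
      cases l <;> simp only [gRev, gStep, h, Bool.false_eq_true, if_false] <;> rw [← this] <;> module
    · have hl : l = Lt.T := by
        cases l
        · exfalso
          have : trunkB (Lt.S :: R) = true := by
            rw [trunkB, List.all_cons,
              show (R.all fun l => decide (l = Lt.S)) = trunkB R from rfl, h]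
            simp
          rw [this] at hR; exact Bool.noConfusion hR
        · rfl
      subst hl
      obtain ⟨h1, h2⟩ := gRev_trunk k s t R h
      simp only [gRev, gStep, h, if_true]
      rw [h2, sub_eq_iff_eq_add.mp h1]
      module

lemma gF_branch (k s t : Fin 3) (W : Word) (hW : ¬ IsTrunk W) :
    (g k s t W).2.1 + (g k s t W).2.2 - (g k s t W).1 = e s + e t - e k := by
  apply gRev_gF
  rw [trunkB_reverse]
  exact trunkB_false W hW

lemma not_trunk_append (W : Word) (l : Lt) (hW : ¬ IsTrunk W) :
    ¬ IsTrunk (W ++ [l]) := fun h => hW fun x hx => h x (by simp [hx])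

lemma main_aux (k s t : Fin 3) :
    ∀ X : Word, ∀ W : Word, ¬ IsTrunk W →
      (g k s t (W ++ X)).1 = (e s + e t - e k) +
        ((qfun (1, 1) X).1 : ℝ) • vSK k s t W +
        ((qfun (1, 1) X).2 : ℝ) • vTK k s t W ∧
      (g k s t (W ++ X)).2.1 = (e s + e t - e k) +
        ((qfun (0, 1) X).1 : ℝ) • vSK k s t W +
        ((qfun (0, 1) X).2 : ℝ) • vTK k s t W ∧
      (g k s t (W ++ X)).2.2 = (e s + e t - e k) +
        ((qfun (1, 0) X).1 : ℝ) • vSK k s t W +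
        ((qfun (1, 0) X).2 : ℝ) • vTK k s t W := by
  intro X
  induction X with
  | nil =>
    intro W hW
    have hF := gF_branch k s t W hW
    rw [← hF]
    simp only [List.append_nil, qfun, vSK, vTK]
    refine ⟨?_, ?_, ?_⟩ <;> push_cast <;> module
  | cons l X ih =>
    intro W hW
    have hW' : ¬ IsTrunk (W ++ [l]) := not_trunk_append W l hW
    obtain ⟨ih1, ih2, ih3⟩ := ih (W ++ [l]) hW'
    have hB : trunkB W = false := trunkB_false W hW
    have hg : W ++ l :: X = (W ++ [l]) ++ X := by simp
    rw [hg]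
    cases l
    · have h1 : vSK k s t (W ++ [Lt.S]) = vSK k s t W := by
        simp only [vSK, g_append_single, hB, gStep]; abel
      have h2 : vTK k s t (W ++ [Lt.S]) = vSK k s t W + vTK k s t W := by
        simp only [vSK, vTK, g_append_single, hB, gStep]; abel
      rw [h1, h2] at ih1 ih2 ih3
      refine ⟨?_, ?_, ?_⟩
      · rw [ih1]; simp only [qfun, qstep]; push_cast; module
      · rw [ih2]; simp only [qfun, qstep]; push_cast; module
      · rw [ih3]; simp only [qfun, qstep]; push_cast; module
    · have h1 : vSK k s t (W ++ [Lt.T]) = vTK k s t W := by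
        simp only [vSK, vTK, g_append_single, hB, gStep, Bool.false_eq_true, if_false]; abel
      have h2 : vTK k s t (W ++ [Lt.T]) = vSK k s t W + vTK k s t W := by
        simp only [vSK, vTK, g_append_single, hB, gStep, Bool.false_eq_true, if_false]; abel
      rw [h1, h2] at ih1 ih2 ih3
      refine ⟨?_, ?_, ?_⟩
      · rw [ih1]; simp only [qfun, qstep]; push_cast; module
      · rw [ih2]; simp only [qfun, qstep]; push_cast; module
      · rw [ih3]; simp only [qfun, qstep]; push_cast; module

/-- recursive formula for g-vectors in a branch. -/
theorem stmt_8 (k s t : Fin 3) (hks : k ≠ s) (hkt : k ≠ t) (hst : s ≠ t)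
    (W : Word) (hW : ¬ IsTrunk W) :
    ∀ X : Word,
      (g k s t (W ++ X)).1 = (e s + e t - e k) +
        ((qfun (1, 1) X).1 : ℝ) • vSK k s t W +
        ((qfun (1, 1) X).2 : ℝ) • vTK k s t W ∧
      (g k s t (W ++ X)).2.1 = (e s + e t - e k) +
        ((qfun (0, 1) X).1 : ℝ) • vSK k s t W +
        ((qfun (0, 1) X).2 : ℝ) • vTK k s t W ∧
      (g k s t (W ++ X)).2.2 = (e s + e t - e k) +
        ((qfun (1, 0) X).1 : ℝ) • vSK k s t W +
        ((qfun (1, 0) X).2 : ℝ) • vTK k s t W := by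
  intro X
  exact main_aux k s t X W hW

end Markov
end

section
/- Let W ∈ 𝓜 be a branch word. Define pairs of integers p_M^X = (p_{M;S}^X, p_{M;T}^X) for M ∈ {K,S,T} and X ∈ 𝓜 by the initial conditions p_K^1 = (1,−1), p_S^1 = (0,1), p_T^1 = (−1,0), and the recursion (for all X ∈ 𝓜, writing (a,b) = p_M^X): p_M^{SX} = (a+b, b) and p_M^{TX} = (−b, −a−b) (letters prepended). Then for every X ∈ 𝓜: c_K^{WX} = −𝔠 + p_{K;S}^X · x_SK^W + p_{K;T}^X · x_TK^W, and for M ∈ {S,T}: c_M^{WX} = 𝔠 + p_{M;S}^X · x_SK^W + p_{M;T}^X · x_TK^W, where 𝔠 = ẽ₁ + ẽ₂ + ẽ₃. -/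
namespace Markov

/-!
Past a branch word every mutation is the same additive map `branchStep` on triples, and it fixes
triples of the form `(-z, z, z)`. So `c^{WX} - (-𝔠, 𝔠, 𝔠)` evolves under `branchStep`, starting from
`c^W - (-𝔠, 𝔠, 𝔠)`, which equals `(x_SK - x_TK, x_TK, -x_SK)` because `c_K + c_S + c_T = 𝔠`
is invariant. The coefficient triple `(p_K^X, p_S^X, p_T^X)` starts from the matching
`((1,-1), (0,1), (-1,0))` and, by linearity of `pfun` in its initial value, also evolves under
`branchStep` as letters are appended, so the two triples agree through `(a, b) ↦ a x_SK + b x_TK`.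
-/

section BranchStep

variable {M N : Type*} [AddCommGroup M] [AddCommGroup N]

/-- The branch-word case of `cStep`, over an arbitrary additive group. -/
def branchStep : Lt → M × M × M → M × M × M
  | Lt.S, v => (-v.2.1, v.1 + 2 • v.2.1, v.2.2)
  | Lt.T, v => (-v.2.2, v.1 + 2 • v.2.2, v.2.1)

def tripleMap (f : M →+ N) : M × M × M →+ N × N × N :=
  f.prodMap (f.prodMap f)

lemma branchStep_tripleMap (f : M →+ N) (l : Lt) (v : M × M × M) :
    branchStep l (tripleMap f v) = tripleMap f (branchStep l v) := by
  cases l <;> simp [branchStep, tripleMap]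

lemma tripleMap_comp {P : Type*} [AddCommGroup P] (g : N →+ P) (f : M →+ N) :
    tripleMap (g.comp f) = (tripleMap g).comp (tripleMap f) := rfl

lemma branchStep_neg_self_add (l : Lt) (z : M) (v : M × M × M) :
    branchStep l ((-z, z, z) + v) = (-z, z, z) + branchStep l v := by
  cases l <;> refine Prod.ext ?_ (Prod.ext ?_ ?_) <;>
    simp only [branchStep, Prod.fst_add, Prod.snd_add, two_nsmul] <;> abel

end BranchStep

lemma pfun_add (p q : ℤ × ℤ) : ∀ X : Word, pfun (p + q) X = pfun p X + pfun q X
  | [] => rfl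
  | l :: X => by
    rw [pfun, pfun, pfun, pfun_add p q X]
    cases l <;> refine Prod.ext ?_ ?_ <;> simp only [pstep, Prod.fst_add, Prod.snd_add] <;> ring

lemma pfun_append (init : ℤ × ℤ) (l : Lt) :
    ∀ X : Word, pfun init (X ++ [l]) = pfun (pstep l init) X
  | [] => rfl
  | a :: X => by simp [pfun, pfun_append init l X]

def pfunHom (X : Word) : ℤ × ℤ →+ ℤ × ℤ :=
  AddMonoidHom.mk' (pfun · X) (fun p q => pfun_add p q X)

/-- The initial pairs `(p_K^1, p_S^1, p_T^1)`. -/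
def pInit : (ℤ × ℤ) × (ℤ × ℤ) × (ℤ × ℤ) := ((1, -1), (0, 1), (-1, 0))

/-- `pstep l` acts on the initial pairs exactly as `branchStep l` does, so prepending letters
in `pfun` amounts to appending them in `branchStep`. -/
lemma tripleMap_pfunHom_append (X : Word) (l : Lt) :
    tripleMap (pfunHom (X ++ [l])) pInit = branchStep l (tripleMap (pfunHom X) pInit) := by
  have hinit : branchStep l pInit = (pstep l (1, -1), pstep l (0, 1), pstep l (-1, 0)) := by
    cases l <;> decide
  rw [branchStep_tripleMap, hinit]
  simp [tripleMap, pfunHom, pInit, pfun_append]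

lemma trunkB_reverse_eq_false {W : Word} (hW : ¬ IsTrunk W) : trunkB W.reverse = false := by
  obtain ⟨a, ha, hne⟩ : ∃ a ∈ W, a ≠ Lt.S := by simpa [IsTrunk] using hW
  rw [trunkB, List.all_eq_false]
  exact ⟨a, List.mem_reverse.2 ha, by simpa using hne⟩

lemma c_append_of_not_isTrunk (k s t : Fin 3) {Y : Word} (hY : ¬ IsTrunk Y) (l : Lt) :
    c k s t (Y ++ [l]) = branchStep l (c k s t Y) := by
  rw [c, List.reverse_append, List.reverse_singleton, List.singleton_append, cRev,
    trunkB_reverse_eq_false hY]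
  cases l <;> rfl

lemma cRev_sum (k s t : Fin 3) :
    ∀ Y : Word, (cRev k s t Y).1 + (cRev k s t Y).2.1 + (cRev k s t Y).2.2 = e k + e s + e t
  | [] => by simp only [cRev]; abel
  | l :: Y => by
    rw [← cRev_sum k s t Y]
    cases l
    · simp only [cRev, cStep, two_nsmul]; abel
    · simp only [cRev, cStep]; split <;> (simp only [two_nsmul]; abel)

lemma e_add_e_add_e_of_ne {k s t : Fin 3} (hks : k ≠ s) (hkt : k ≠ t) (hst : s ≠ t) :
    e k + e s + e t = e 0 + e 1 + e 2 := by
  fin_cases k <;> fin_cases s <;> fin_cases t <;> simp_all <;> abel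

noncomputable def xComb (k s t : Fin 3) (W : Word) : ℤ × ℤ →+ V3 :=
  AddMonoidHom.mk' (fun p => (p.1 : ℝ) • xSK k s t W + (p.2 : ℝ) • xTK k s t W)
    (fun p q => by simp only [Prod.fst_add, Prod.snd_add, Int.cast_add]; module)

lemma c_append_eq (k s t : Fin 3) (hks : k ≠ s) (hkt : k ≠ t) (hst : s ≠ t)
    {W : Word} (hW : ¬ IsTrunk W) (X : Word) :
    c k s t (W ++ X) = (-(e 0 + e 1 + e 2), e 0 + e 1 + e 2, e 0 + e 1 + e 2) +
      tripleMap ((xComb k s t W).comp (pfunHom X)) pInit := by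
  induction X using List.reverseRecOn with
  | nil =>
    have hsum : (c k s t W).1 + (c k s t W).2.1 + (c k s t W).2.2 = e 0 + e 1 + e 2 := by
      rw [c, cRev_sum, e_add_e_add_e_of_ne hks hkt hst]
    rw [← hsum]
    simp only [List.append_nil, tripleMap, pInit, AddMonoidHom.coe_prodMap, Prod.map_apply,
      AddMonoidHom.comp_apply, pfunHom, pfun, AddMonoidHom.mk'_apply, xComb, xSK, xTK,
      Prod.mk_add_mk]
    push_cast
    refine Prod.ext ?_ (Prod.ext ?_ ?_) <;> module
  | append_singleton X l ih =>
    have hWX : ¬ IsTrunk (W ++ X) := fun h => hW fun a ha => h a (List.mem_append_left X ha)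
    rw [← List.append_assoc, c_append_of_not_isTrunk k s t hWX, ih, branchStep_neg_self_add,
      tripleMap_comp, tripleMap_comp, AddMonoidHom.comp_apply, AddMonoidHom.comp_apply,
      tripleMap_pfunHom_append, branchStep_tripleMap]

/-- recursive formula for c-vectors in a branch. -/
theorem stmt_9 (k s t : Fin 3) (hks : k ≠ s) (hkt : k ≠ t) (hst : s ≠ t)
    (W : Word) (hW : ¬ IsTrunk W) :
    ∀ X : Word,
      (c k s t (W ++ X)).1 = -(e 0 + e 1 + e 2) +
        ((pfun (1, -1) X).1 : ℝ) • xSK k s t W +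
        ((pfun (1, -1) X).2 : ℝ) • xTK k s t W ∧
      (c k s t (W ++ X)).2.1 = (e 0 + e 1 + e 2) +
        ((pfun (0, 1) X).1 : ℝ) • xSK k s t W +
        ((pfun (0, 1) X).2 : ℝ) • xTK k s t W ∧
      (c k s t (W ++ X)).2.2 = (e 0 + e 1 + e 2) +
        ((pfun (-1, 0) X).1 : ℝ) • xSK k s t W +
        ((pfun (-1, 0) X).2 : ℝ) • xTK k s t W := by
  intro X
  rw [c_append_eq k s t hks hkt hst hW X]
  simp [tripleMap, xComb, pfunHom, pInit, add_assoc]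

end Markov
end

section
/- Define f : 𝓜 → ℤ × ℤ by f(1) = (1,1) and, writing (a,b) = f(X), f(SX) = (a+b, b) and f(TX) = (b, a+b) (letters prepended). Then f is injective and its image is exactly the set {(a,b) ∈ ℤ² : a ≥ 1, b ≥ 1, gcd(a,b) = 1}; that is, every pair of coprime positive integers occurs exactly once in the family {f(X)}_{X ∈ 𝓜}. -/
namespace Markov

lemma gcd_add_left {a b : ℤ} (h : Int.gcd a b = 1) : Int.gcd (a + b) b = 1 := by
  rw [← Int.isCoprime_iff_gcd_eq_one] at h ⊢
  simpa using h.add_mul_left_left 1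

lemma gcd_add_right {a b : ℤ} (h : Int.gcd a b = 1) : Int.gcd b (a + b) = 1 := by
  rw [← Int.isCoprime_iff_gcd_eq_one] at h ⊢
  simpa [add_comm] using (h.symm).add_mul_left_right 1

lemma gcd_sub_left {a b : ℤ} (h : Int.gcd a b = 1) : Int.gcd (a - b) b = 1 := by
  rw [← Int.isCoprime_iff_gcd_eq_one] at h ⊢
  simpa [sub_eq_add_neg] using h.add_mul_left_left (-1)

lemma gcd_sub_right {a b : ℤ} (h : Int.gcd a b = 1) : Int.gcd a (b - a) = 1 := by
  rw [← Int.isCoprime_iff_gcd_eq_one] at h ⊢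
  simpa [sub_eq_add_neg] using h.add_mul_left_right (-1)

lemma qfun_cons (init : ℤ × ℤ) (l : Lt) (X : Word) :
    qfun init (l :: X) = qstep l (qfun init X) := rfl

lemma qstep_S (a b : ℤ) : qstep Lt.S (a, b) = (a + b, b) := rfl
lemma qstep_T (a b : ℤ) : qstep Lt.T (a, b) = (b, a + b) := rfl

lemma qfun_props : ∀ X : Word, 1 ≤ (qfun (1,1) X).1 ∧ 1 ≤ (qfun (1,1) X).2 ∧
    Int.gcd (qfun (1,1) X).1 (qfun (1,1) X).2 = 1 := by
  intro X
  induction X with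
  | nil => exact ⟨le_refl 1, le_refl 1, by decide⟩
  | cons l X ih =>
    rcases hq : qfun ((1 : ℤ), (1 : ℤ)) X with ⟨a, b⟩
    rw [hq] at ih
    obtain ⟨h1, h2, h3⟩ := ih
    dsimp at h1 h2 h3
    cases l with
    | S =>
      rw [qfun_cons, hq, qstep_S]
      exact ⟨by dsimp; omega, h2, gcd_add_left h3⟩
    | T =>
      rw [qfun_cons, hq, qstep_T]
      exact ⟨h2, by dsimp; omega, gcd_add_right h3⟩

lemma qfun_inj : ∀ X Y : Word, qfun (1,1) X = qfun (1,1) Y → X = Y := by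
  intro X
  induction X with
  | nil =>
    intro Y h
    cases Y with
    | nil => rfl
    | cons m Y =>
      exfalso
      rcases hq : qfun ((1 : ℤ), (1 : ℤ)) Y with ⟨a, b⟩
      have hp := qfun_props Y
      rw [hq] at hp
      obtain ⟨h1, h2, _⟩ := hp
      rw [qfun_cons, hq] at h
      cases m <;> rw [show qfun ((1:ℤ),(1:ℤ)) [] = ((1:ℤ),(1:ℤ)) from rfl] at h <;>
        [rw [qstep_S] at h; rw [qstep_T] at h] <;>
        · have h' := congrArg Prod.fst h
          have h'' := congrArg Prod.snd h
          dsimp at h' h'' h1 h2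
          omega
  | cons l X ih =>
    intro Y h
    rcases hq : qfun ((1 : ℤ), (1 : ℤ)) X with ⟨a, b⟩
    have hp := qfun_props X
    rw [hq] at hp
    obtain ⟨h1, h2, _⟩ := hp
    dsimp at h1 h2
    cases Y with
    | nil =>
      exfalso
      rw [qfun_cons, hq] at h
      cases l <;> rw [show qfun ((1:ℤ),(1:ℤ)) [] = ((1:ℤ),(1:ℤ)) from rfl] at h <;>
        [rw [qstep_S] at h; rw [qstep_T] at h] <;>
        · have h' := congrArg Prod.fst h
          have h'' := congrArg Prod.snd h
          dsimp at h' h''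
          omega
    | cons m Y =>
      rcases hq' : qfun ((1 : ℤ), (1 : ℤ)) Y with ⟨c, d⟩
      have hp' := qfun_props Y
      rw [hq'] at hp'
      obtain ⟨h1', h2', _⟩ := hp'
      dsimp at h1' h2'
      rw [qfun_cons, hq, qfun_cons, hq'] at h
      have key : l = m ∧ a = c ∧ b = d := by
        cases l <;> cases m <;>
          [rw [qstep_S, qstep_S] at h;
           rw [qstep_S, qstep_T] at h;
           rw [qstep_T, qstep_S] at h;
           rw [qstep_T, qstep_T] at h] <;>
          · have h' := congrArg Prod.fst h
            have h'' := congrArg Prod.snd h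
            dsimp at h' h''
            first
            | exact ⟨rfl, by omega, by omega⟩
            | omega
      rw [key.1, ih Y (by rw [hq, hq', key.2.1, key.2.2])]

lemma qfun_surj : ∀ n : ℕ, ∀ a b : ℤ, a.natAbs + b.natAbs ≤ n → 1 ≤ a → 1 ≤ b →
    Int.gcd a b = 1 → ∃ X : Word, qfun (1,1) X = (a, b) := by
  intro n
  induction n with
  | zero => intro a b hn ha hb _; omega
  | succ n ih =>
    intro a b hn ha hb hg
    rcases lt_trichotomy a b with hlt | heq | hgt
    · have hg' : Int.gcd (b - a) a = 1 := gcd_sub_left (by rwa [Int.gcd_comm] at hg)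
      obtain ⟨X, hX⟩ := ih (b - a) a (by omega) (by omega) ha hg'
      refine ⟨Lt.T :: X, ?_⟩
      rw [qfun_cons, hX, qstep_T]
      exact Prod.ext rfl (by dsimp; ring)
    · have ha1 : a = 1 := by
        have h2 := hg
        rw [heq, Int.gcd_self] at h2
        omega
      refine ⟨[], ?_⟩
      rw [show qfun ((1:ℤ),(1:ℤ)) [] = ((1:ℤ),(1:ℤ)) from rfl, ha1, ← heq, ha1]
    · obtain ⟨X, hX⟩ := ih (a - b) b (by omega) (by omega) hb (gcd_sub_left hg)
      refine ⟨Lt.S :: X, ?_⟩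
      rw [qfun_cons, hX, qstep_S]
      exact Prod.ext (by dsimp; ring) rfl

/-- Calkin–Wilf-type enumeration of coprime positive pairs. -/
theorem stmt_10 :
    Function.Injective (qfun (1, 1)) ∧
    Set.range (qfun (1, 1)) =
      {p : ℤ × ℤ | 1 ≤ p.1 ∧ 1 ≤ p.2 ∧ Int.gcd p.1 p.2 = 1} := by
  constructor
  · exact fun X Y h => qfun_inj X Y h
  · ext ⟨a, b⟩
    constructor
    · rintro ⟨X, hX⟩
      have := qfun_props X
      rw [hX] at this
      exact this
    · rintro ⟨ha, hb, hg⟩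
      obtain ⟨X, hX⟩ := qfun_surj (a.natAbs + b.natAbs) a b le_rfl ha hb hg
      exact ⟨X, hX⟩

end Markov
end

section
/- Define p : 𝓜 → ℤ × ℤ by p(1) = (0,1) and, writing (a,b) = p(X), p(SX) = (a+b, b) and p(TX) = (−b, −a−b) (letters prepended). Then p is injective and its image is exactly the set {(0,1)} ∪ {(a,b) ∈ ℤ² : ab ≥ 1 and gcd(|a|,|b|) = 1}. -/
namespace Markov

/-! `pstep` is the action of `S` and `T` by the matrices `[[1,1],[0,1]]` and `[[0,-1],[-1,-1]]`,
both of determinant `±1`: it preserves the gcd of a pair and raises the product of its entries by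
the square of the second one. The product therefore strictly decreases along the inverse steps,
and it drives the descent from any pair `(a, b)` with `ab ≥ 1` and coprime entries down to the
root `(0, 1)`; the descent is unique because the images under `S` and `T` never meet. -/

def sameSignCoprimePairs : Set (ℤ × ℤ) := {p | 1 ≤ p.1 * p.2 ∧ Int.gcd p.1 p.2 = 1}

lemma pstep_mul (l : Lt) (p : ℤ × ℤ) :
    (pstep l p).1 * (pstep l p).2 = p.1 * p.2 + p.2 ^ 2 := by
  cases l <;> simp only [pstep] <;> ring

lemma gcd_pstep (l : Lt) (p : ℤ × ℤ) :
    Int.gcd (pstep l p).1 (pstep l p).2 = Int.gcd p.1 p.2 := by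
  cases l
  · exact Int.gcd_add_self_left p.2 p.1
  · change Int.gcd (-p.2) (-p.1 - p.2) = _
    rw [show -p.1 - p.2 = -(p.1 + p.2) by ring, Int.neg_gcd, Int.gcd_neg, Int.gcd_add_self_right,
      Int.gcd_comm]

lemma pstep_injective (l : Lt) : Function.Injective (pstep l) := by
  rintro ⟨a, b⟩ ⟨c, d⟩ h
  cases l <;> simp only [pstep, Prod.mk.injEq] at h ⊢ <;> omega

lemma pstep_mem_sameSignCoprimePairs {p : ℤ × ℤ} (hp : p ∈ insert (0, 1) sameSignCoprimePairs)
    (l : Lt) : pstep l p ∈ sameSignCoprimePairs := by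
  rcases hp with rfl | ⟨hmul, hgcd⟩
  · cases l <;> exact ⟨by decide, by decide⟩
  · exact ⟨by nlinarith [pstep_mul l p, sq_nonneg p.2], (gcd_pstep l p).trans hgcd⟩

lemma pstep_S_ne_pstep_T {p q : ℤ × ℤ} (hp : p ∈ insert (0, 1) sameSignCoprimePairs)
    (hq : q ∈ insert (0, 1) sameSignCoprimePairs) : pstep Lt.S p ≠ pstep Lt.T q := by
  obtain ⟨a, b⟩ := p
  obtain ⟨c, d⟩ := q
  intro h
  simp only [pstep, Prod.mk.injEq] at h
  obtain ⟨rfl, rfl⟩ : a = c ∧ b = -c - d := by omega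
  rcases hp with hp | ⟨hp, -⟩ <;> rcases hq with hq | ⟨hq, -⟩ <;>
    simp only [Prod.mk.injEq] at hp hq <;> nlinarith [sq_nonneg a]

lemma pfun_mem (X : Word) : pfun (0, 1) X ∈ insert (0, 1) sameSignCoprimePairs := by
  induction X with
  | nil => exact Set.mem_insert _ _
  | cons l X ih => exact Set.mem_insert_of_mem _ (pstep_mem_sameSignCoprimePairs ih l)

lemma pfun_cons_ne_zero_one (l : Lt) (X : Word) : pfun (0, 1) (l :: X) ≠ (0, 1) := by
  intro h
  have hmem := pstep_mem_sameSignCoprimePairs (pfun_mem X) l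
  rw [← pfun, h] at hmem
  exact absurd hmem.1 (by decide)

lemma pfun_injective : Function.Injective (pfun (0, 1)) := by
  intro X
  induction X with
  | nil =>
    rintro (_ | ⟨m, Y⟩) h
    · rfl
    · exact absurd h.symm (pfun_cons_ne_zero_one m Y)
  | cons l X ih =>
    rintro (_ | ⟨m, Y⟩) h
    · exact absurd h (pfun_cons_ne_zero_one l X)
    simp only [pfun] at h
    obtain rfl : l = m := by
      cases l <;> cases m
      · rfl
      · exact absurd h (pstep_S_ne_pstep_T (pfun_mem X) (pfun_mem Y))
      · exact absurd h.symm (pstep_S_ne_pstep_T (pfun_mem Y) (pfun_mem X))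
      · rfl
    rw [ih (pstep_injective l h)]

lemma exists_pstep_eq {p : ℤ × ℤ} (hp : p ∈ sameSignCoprimePairs) :
    ∃ l q, pstep l q = p ∧ q ∈ insert (0, 1) sameSignCoprimePairs := by
  suffices h : ∃ l q, pstep l q = p ∧ (q = (0, 1) ∨ 1 ≤ q.1 * q.2) by
    obtain ⟨l, q, rfl, hq⟩ := h
    exact ⟨l, q, rfl, hq.imp_right fun h => ⟨h, (gcd_pstep l q).symm.trans hp.2⟩⟩
  obtain ⟨a, b⟩ := p
  obtain ⟨hmul, hgcd⟩ : 1 ≤ a * b ∧ Int.gcd a b = 1 := hp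
  rcases eq_or_ne a b with rfl | hne
  · rcases Int.natAbs_eq_iff.1 (Int.gcd_self ▸ hgcd) with rfl | rfl
    · exact ⟨Lt.S, (0, 1), rfl, Or.inl rfl⟩
    · exact ⟨Lt.T, (0, 1), rfl, Or.inl rfl⟩
  by_cases hS : 1 ≤ (a - b) * b
  · exact ⟨Lt.S, (a - b, b), by simp [pstep], Or.inr hS⟩
  refine ⟨Lt.T, (a - b, -a), by simp [pstep], Or.inr ?_⟩
  -- `(a - b) a` and `(a - b) b` have the same sign, their product being `(a - b)² ab > 0`.
  have hsame : 0 < (a - b) * a * ((a - b) * b) := by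
    have := sq_pos_of_ne_zero (sub_ne_zero.2 hne)
    nlinarith
  dsimp only
  nlinarith

lemma mem_range_pfun {p : ℤ × ℤ} (hp : p ∈ insert (0, 1) sameSignCoprimePairs) :
    p ∈ Set.range (pfun (0, 1)) := by
  induction hn : (p.1 * p.2).toNat using Nat.strong_induction_on generalizing p with
  | _ n ih =>
    rcases hp with rfl | hp
    · exact ⟨[], rfl⟩
    obtain ⟨l, q, rfl, hq⟩ := exists_pstep_eq hp
    have hq_mul : 0 ≤ q.1 * q.2 ∧ q.2 ≠ 0 := by
      rcases hq with rfl | ⟨hq, -⟩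
      · decide
      · exact ⟨by omega, by rintro h; simp [h] at hq⟩
    have hlt : (q.1 * q.2).toNat < n := by
      have := pstep_mul l q
      have := sq_pos_of_ne_zero hq_mul.2
      omega
    obtain ⟨X, hX⟩ := ih _ hlt hq rfl
    exact ⟨l :: X, by simp only [pfun, hX]⟩

/-- enumeration of the coefficient pairs for c-vectors. -/
theorem stmt_11 :
    Function.Injective (pfun (0, 1)) ∧
    Set.range (pfun (0, 1)) =
      {((0 : ℤ), (1 : ℤ))} ∪
        {p : ℤ × ℤ | 1 ≤ p.1 * p.2 ∧ Int.gcd p.1 p.2 = 1} := by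
  refine ⟨pfun_injective, ?_⟩
  rw [← Set.insert_eq]
  exact (Set.range_subset_iff.2 pfun_mem).antisymm fun p hp => mem_range_pfun hp

end Markov
end

section
/- A vector v ∈ ℝ³ satisfies v = g_M^X for some X ∈ 𝓜 and M ∈ {K,S,T} if and only if v = 𝔤 + a(ẽ_{k₀} − ẽ_{t₀}) + b(ẽ_{s₀} − ẽ_{k₀}) for some (a,b) ∈ ℤ² satisfying either (a ≥ 1, b ≥ 1 and gcd(a,b) = 1) or (a,b) ∈ {(1,0), (0,−1)}, where 𝔤 = ẽ_{s₀} + ẽ_{t₀} − ẽ_{k₀}. Moreover, (a,b) = (1,0) gives v = ẽ_{s₀} and (a,b) = (0,−1) gives v = ẽ_{t₀}. -/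
namespace Markov

/-!
The g-vectors all lie in the affine lattice `𝔤 + ℤ(ẽ_{k₀} − ẽ_{t₀}) + ℤ(ẽ_{s₀} − ẽ_{k₀})`, and
every mutation step is of the form `(x, y) ↦ 2x − y`, so the whole problem can be transported
to integer coordinates `(a, b)`. There the trunk `Sⁿ` gives `(1, n + 1), (1, n), (0, −1)`, and
along a branch word the triple has the form `(u + v, u, v)` with `u, v` a unimodular pair in the
first quadrant, each further letter replacing `{u, v}` by `{u + v, v}` or `{u + v, u}`. Running this
Stern–Brocot recursion backwards (subtract the smaller vector from the larger) shows that every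
such unimodular pair occurs, and Bézout writes every coprime `(a, b)` with `a ≥ 2` as `u + v`.
-/

def gStepZ (trunk : Bool) (l : Lt) (v : (ℤ × ℤ) × (ℤ × ℤ) × (ℤ × ℤ)) :
    (ℤ × ℤ) × (ℤ × ℤ) × (ℤ × ℤ) :=
  match l with
  | Lt.S => (2 • v.1 - v.2.1, v.1, v.2.2)
  | Lt.T =>
    if trunk then (2 • v.2.1 - v.2.2, v.2.1, v.1)
    else (2 • v.1 - v.2.2, v.1, v.2.1)

def gRevZ : Word → (ℤ × ℤ) × (ℤ × ℤ) × (ℤ × ℤ)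
  | [] => ((1, 1), (1, 0), (0, -1))
  | l :: X => gStepZ (trunkB X) l (gRevZ X)

section Coordinates

variable (k s t : Fin 3)

noncomputable def coord (p : ℤ × ℤ) : V3 :=
  (e s + e t - e k) + (p.1 : ℝ) • (e k - e t) + (p.2 : ℝ) • (e s - e k)

lemma coord_two_nsmul_sub (p q : ℤ × ℤ) :
    coord k s t (2 • p - q) = 2 • coord k s t p - coord k s t q := by
  simp only [coord, two_nsmul, Prod.fst_sub, Prod.snd_sub, Prod.fst_add, Prod.snd_add]
  push_cast
  module

lemma gRev_eq_map_coord (Y : Word) :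
    gRev k s t Y = Prod.map (coord k s t) (Prod.map (coord k s t) (coord k s t)) (gRevZ Y) := by
  induction Y with
  | nil =>
    simp only [gRev, gRevZ, Prod.map, coord]
    refine Prod.ext ?_ (Prod.ext ?_ ?_) <;> (push_cast; module)
  | cons l X ih =>
    cases l with
    | S => simp only [gRev, gRevZ, gStep, gStepZ, ih, Prod.map, coord_two_nsmul_sub]
    | T =>
      cases h : trunkB X <;>
        simp only [gRev, gRevZ, gStep, gStepZ, ih, h, Prod.map, coord_two_nsmul_sub,
          Bool.false_eq_true, if_true, if_false]

end Coordinates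

def det (u v : ℤ × ℤ) : ℤ := u.1 * v.2 - u.2 * v.1

structure IsFareyPair (u v : ℤ × ℤ) : Prop where
  one_le_fst_left : 1 ≤ u.1
  nonneg_snd_left : 0 ≤ u.2
  one_le_fst_right : 1 ≤ v.1
  nonneg_snd_right : 0 ≤ v.2
  det_eq : det u v = 1 ∨ det u v = -1

def IsGCoord (a b : ℤ) : Prop :=
  (1 ≤ a ∧ 1 ≤ b ∧ Int.gcd a b = 1) ∨ (a = 1 ∧ b = 0) ∨ (a = 0 ∧ b = -1)

lemma gcd_eq_one_of_det_eq {a b c d : ℤ} (h : a * d - b * c = 1 ∨ a * d - b * c = -1) :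
    Int.gcd a b = 1 := by
  rw [← Int.isCoprime_iff_gcd_eq_one]
  rcases h with h | h
  · exact ⟨d, -c, by linarith⟩
  · exact ⟨-d, c, by linarith⟩

namespace IsFareyPair

variable {u v : ℤ × ℤ}

lemma symm (h : IsFareyPair u v) : IsFareyPair v u := by
  obtain ⟨h₁, h₂, h₃, h₄, h₅⟩ := h
  have : det v u = -det u v := by unfold det; ring
  exact ⟨h₃, h₄, h₁, h₂, by omega⟩

lemma add (h : IsFareyPair u v) : IsFareyPair (u + v) v := by
  obtain ⟨h₁, h₂, h₃, h₄, h₅⟩ := h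
  refine ⟨by simp only [Prod.fst_add]; omega, by simp only [Prod.snd_add]; omega, h₃, h₄, ?_⟩
  have : det (u + v) v = det u v := by simp only [det, Prod.fst_add, Prod.snd_add]; ring
  rwa [this]

lemma add' (h : IsFareyPair u v) : IsFareyPair (u + v) u :=
  add_comm v u ▸ h.symm.add

lemma sub (h : IsFareyPair u v) (hlt : v.1 < u.1) : IsFareyPair (u - v) v := by
  obtain ⟨h₁, h₂, h₃, h₄, h₅⟩ := h
  have hsnd : v.2 ≤ u.2 := by
    by_contra! hgt
    -- otherwise `det u v ≥ u.1 + u.2 * (u.1 - v.1) ≥ 2`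
    unfold det at h₅
    rcases h₅ with h₅ | h₅ <;> nlinarith [mul_nonneg h₂ (sub_nonneg.2 hlt.le)]
  refine ⟨by simp only [Prod.fst_sub]; omega, by simp only [Prod.snd_sub]; omega, h₃, h₄, ?_⟩
  have : det (u - v) v = det u v := by simp only [det, Prod.fst_sub, Prod.snd_sub]; ring
  rwa [this]

lemma eq_trunk_of_fst_eq (h : IsFareyPair u v) (hfst : u.1 = v.1) (hsnd : u.2 ≤ v.2) :
    u = (1, u.2) ∧ v = (1, u.2 + 1) := by
  obtain ⟨h₁, -, -, -, h₅⟩ := h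
  have hdet : det u v = u.1 * (v.2 - u.2) := by rw [det, hfst]; ring
  have hone : u.1 * (v.2 - u.2) = 1 := by
    rcases h₅ with h₅ | h₅ <;> rw [hdet] at h₅
    · exact h₅
    · nlinarith [mul_nonneg (by omega : (0 : ℤ) ≤ u.1) (sub_nonneg.2 hsnd)]
  have hu : u.1 = 1 := Int.eq_one_of_mul_eq_one_right (by omega) hone
  rw [hu, one_mul] at hone
  exact ⟨Prod.ext hu rfl, Prod.ext (by omega) (by omega)⟩

lemma isGCoord_left (h : IsFareyPair u v) : IsGCoord u.1 u.2 := by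
  have hgcd : Int.gcd u.1 u.2 = 1 := gcd_eq_one_of_det_eq h.det_eq
  rcases h.nonneg_snd_left.eq_or_lt with h0 | h0
  · rw [← h0, Int.gcd_zero_right] at hgcd
    exact Or.inr (Or.inl ⟨by have := h.one_le_fst_left; omega, h0.symm⟩)
  · exact Or.inl ⟨h.one_le_fst_left, h0, hgcd⟩

lemma isGCoord_add (h : IsFareyPair u v) : IsGCoord (u + v).1 (u + v).2 := by
  have := h.one_le_fst_left
  have := h.one_le_fst_right
  rcases h.add.isGCoord_left with h' | ⟨h', -⟩ | ⟨h', -⟩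
  · exact Or.inl h'
  all_goals simp only [Prod.fst_add] at h'; omega

end IsFareyPair

lemma exists_isFareyPair_add_eq {a b : ℤ} (ha : 2 ≤ a) (hb : 1 ≤ b) (hab : Int.gcd a b = 1) :
    ∃ u v, IsFareyPair u v ∧ u + v = (a, b) := by
  obtain ⟨m, n, hmn⟩ := Int.isCoprime_iff_gcd_eq_one.2 hab
  -- `x` is the inverse of `-b` modulo `a`
  set x := -n % a with hx
  have hx0 : 0 ≤ x := Int.emod_nonneg _ (by omega)
  have hxa : x < a := Int.emod_lt_of_pos _ (by omega)
  obtain ⟨y, hy⟩ : a ∣ b * x + 1 :=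
    ⟨m - b * (-n / a), by rw [hx, Int.emod_def]; linear_combination -hmn⟩
  have hx1 : x ≠ 0 := by
    rintro h0
    rw [h0] at hy
    have := Int.eq_one_of_mul_eq_one_right (a := a) (b := y) (by omega) (by linarith)
    omega
  refine ⟨(x, y), (a - x, b - y), ⟨by simp only; omega, ?_, by simp; omega, ?_, Or.inr ?_⟩, by simp⟩
  · nlinarith
  · simp only; nlinarith
  · simp only [det]; linarith

lemma trunkB_eq_true_iff_s13 {Y : Word} : trunkB Y = true ↔ Y = List.replicate Y.length Lt.S := by
  simp [trunkB, List.eq_replicate_iff]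

lemma trunkB_cons_S (Y : Word) : trunkB (Lt.S :: Y) = trunkB Y := by
  simp [trunkB]

lemma gRevZ_replicate (n : ℕ) :
    gRevZ (List.replicate n Lt.S) = ((1, (n : ℤ) + 1), (1, (n : ℤ)), (0, -1)) := by
  induction n with
  | zero => rfl
  | succ n ih =>
    rw [List.replicate_succ, gRevZ, ih, gStepZ]
    ext <;> simp; ring

lemma gRevZ_T_replicate (n : ℕ) :
    gRevZ (Lt.T :: List.replicate n Lt.S) =
      ((1, (n : ℤ)) + (1, (n : ℤ) + 1), (1, (n : ℤ)), (1, (n : ℤ) + 1)) := by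
  have : trunkB (List.replicate n Lt.S) = true := by simp [trunkB_eq_true_iff_s13]
  rw [gRevZ, gRevZ_replicate, gStepZ, if_pos this]
  ext <;> simp; ring

lemma gRevZ_cons_of_trunkB_eq_false {Y : Word} (hY : trunkB Y = false) {u v : ℤ × ℤ}
    (h : gRevZ Y = (u + v, u, v)) :
    gRevZ (Lt.S :: Y) = (u + v + v, u + v, v) ∧ gRevZ (Lt.T :: Y) = (u + v + u, u + v, u) := by
  simp only [gRevZ, gStepZ, hY, h, Bool.false_eq_true, if_false]
  constructor <;> ext <;> simp <;> ring

lemma isFareyPair_trunk (n : ℕ) : IsFareyPair (1, (n : ℤ)) (1, (n : ℤ) + 1) :=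
  ⟨le_rfl, by positivity, le_rfl, by positivity, Or.inl (by simp [det])⟩

lemma exists_isFareyPair_of_trunkB_eq_false {Y : Word} (hY : trunkB Y = false) :
    ∃ u v, IsFareyPair u v ∧ gRevZ Y = (u + v, u, v) := by
  induction Y with
  | nil => simp [trunkB] at hY
  | cons l X ih =>
    cases hX : trunkB X with
    | true =>
      cases l with
      | S => simp [trunkB_cons_S, hX] at hY
      | T =>
        rw [trunkB_eq_true_iff_s13.1 hX, gRevZ_T_replicate]
        exact ⟨_, _, isFareyPair_trunk _, rfl⟩
    | false =>
      obtain ⟨u, v, huv, h⟩ := ih hX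
      obtain ⟨hS, hT⟩ := gRevZ_cons_of_trunkB_eq_false hX h
      cases l
      · exact ⟨_, _, huv.add, hS⟩
      · exact ⟨_, _, huv.add', hT⟩

lemma IsFareyPair.exists_word {u v : ℤ × ℤ} (h : IsFareyPair u v) :
    ∃ Y, trunkB Y = false ∧ (gRevZ Y = (u + v, u, v) ∨ gRevZ Y = (u + v, v, u)) := by
  induction hn : (u.1 + v.1).toNat using Nat.strong_induction_on generalizing u v with
  | _ n ih =>
  wlog hle : v.1 < u.1 ∨ (v.1 = u.1 ∧ u.2 ≤ v.2) generalizing u v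
  · obtain ⟨Y, hY, hY'⟩ := this h.symm (by rw [add_comm, hn]) (by omega)
    exact ⟨Y, hY, by rwa [add_comm, or_comm]⟩
  rcases hle with hlt | ⟨hfst, hsnd⟩
  · have hsub := h.sub hlt
    have := h.one_le_fst_right
    obtain ⟨Y, hY, hY' | hY'⟩ := ih _ (by rw [← hn]; simp only [Prod.fst_sub]; omega) hsub rfl
    · refine ⟨Lt.S :: Y, by rwa [trunkB_cons_S], Or.inl ?_⟩
      simpa using (gRevZ_cons_of_trunkB_eq_false hY hY').1
    · rw [add_comm] at hY'
      refine ⟨Lt.T :: Y, by simp [trunkB], Or.inl ?_⟩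
      simpa using (gRevZ_cons_of_trunkB_eq_false hY hY').2
  · obtain ⟨hu, hv⟩ := h.eq_trunk_of_fst_eq hfst.symm hsnd
    refine ⟨Lt.T :: List.replicate u.2.toNat Lt.S, by simp [trunkB], Or.inl ?_⟩
    rw [gRevZ_T_replicate, Int.toNat_of_nonneg h.nonneg_snd_left, ← hu, ← hv]

lemma exists_eq_gRevZ_iff_isGCoord (p : ℤ × ℤ) :
    (∃ Y, p = (gRevZ Y).1 ∨ p = (gRevZ Y).2.1 ∨ p = (gRevZ Y).2.2) ↔ IsGCoord p.1 p.2 := by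
  constructor
  · rintro ⟨Y, hY⟩
    cases hb : trunkB Y with
    | true =>
      have htrunk := isFareyPair_trunk Y.length
      rw [trunkB_eq_true_iff_s13.1 hb, gRevZ_replicate] at hY
      rcases hY with rfl | rfl | rfl
      exacts [htrunk.symm.isGCoord_left, htrunk.isGCoord_left, Or.inr (Or.inr ⟨rfl, rfl⟩)]
    | false =>
      obtain ⟨u, v, huv, h⟩ := exists_isFareyPair_of_trunkB_eq_false hb
      rw [h] at hY
      rcases hY with rfl | rfl | rfl
      exacts [huv.isGCoord_add, huv.isGCoord_left, huv.symm.isGCoord_left]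
  · obtain ⟨a, b⟩ := p
    rintro (⟨ha, hb, hab⟩ | ⟨rfl, rfl⟩ | ⟨rfl, rfl⟩)
    · rcases ha.eq_or_lt with rfl | ha
      · refine ⟨List.replicate (b - 1).toNat Lt.S, Or.inl ?_⟩
        rw [gRevZ_replicate, Int.toNat_of_nonneg (by omega), sub_add_cancel]
      · obtain ⟨u, v, huv, huv_eq⟩ := exists_isFareyPair_add_eq ha hb hab
        obtain ⟨Y, -, h | h⟩ := huv.exists_word <;> exact ⟨Y, Or.inl (by rw [h, huv_eq])⟩
    · exact ⟨[], Or.inr (Or.inl rfl)⟩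
    · exact ⟨[], Or.inr (Or.inr rfl)⟩

theorem stmt_13_general (k s t : Fin 3) :
    (∀ v : V3,
      (∃ X : Word,
        v = (g k s t X).1 ∨ v = (g k s t X).2.1 ∨ v = (g k s t X).2.2) ↔
      (∃ a b : ℤ,
        v = (e s + e t - e k) + (a : ℝ) • (e k - e t) + (b : ℝ) • (e s - e k) ∧
        ((1 ≤ a ∧ 1 ≤ b ∧ Int.gcd a b = 1) ∨ (a = 1 ∧ b = 0) ∨
          (a = 0 ∧ b = -1)))) ∧
    (e s + e t - e k) + ((1 : ℝ) • (e k - e t) + (0 : ℝ) • (e s - e k)) = e s ∧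
    (e s + e t - e k) + ((0 : ℝ) • (e k - e t) + (-1 : ℝ) • (e s - e k)) = e t := by
  refine ⟨fun v => ?_, by module, by module⟩
  have hg (X : Word) : g k s t X =
      Prod.map (coord k s t) (Prod.map (coord k s t) (coord k s t)) (gRevZ X.reverse) :=
    gRev_eq_map_coord k s t _
  constructor
  · rintro ⟨X, hX⟩
    obtain ⟨p, rfl, hp⟩ : ∃ p, v = coord k s t p ∧
        ∃ Y, p = (gRevZ Y).1 ∨ p = (gRevZ Y).2.1 ∨ p = (gRevZ Y).2.2 := by
      rw [hg] at hX
      rcases hX with h | h | h <;> exact ⟨_, h, X.reverse, by simp⟩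
    exact ⟨p.1, p.2, rfl, (exists_eq_gRevZ_iff_isGCoord p).1 hp⟩
  · rintro ⟨a, b, rfl, hab⟩
    obtain ⟨Y, hY⟩ := (exists_eq_gRevZ_iff_isGCoord (a, b)).2 hab
    refine ⟨Y.reverse, ?_⟩
    rw [hg, List.reverse_reverse]
    rcases hY with h | h | h <;> simp [← h, coord]

/-- coprime-number expression of all modified g-vectors. -/
theorem stmt_13 (k s t : Fin 3) (hks : k ≠ s) (hkt : k ≠ t) (hst : s ≠ t) :
    (∀ v : V3,
      (∃ X : Word,
        v = (g k s t X).1 ∨ v = (g k s t X).2.1 ∨ v = (g k s t X).2.2) ↔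
      (∃ a b : ℤ,
        v = (e s + e t - e k) + (a : ℝ) • (e k - e t) + (b : ℝ) • (e s - e k) ∧
        ((1 ≤ a ∧ 1 ≤ b ∧ Int.gcd a b = 1) ∨ (a = 1 ∧ b = 0) ∨
          (a = 0 ∧ b = -1)))) ∧
    (e s + e t - e k) + ((1 : ℝ) • (e k - e t) + (0 : ℝ) • (e s - e k)) = e s ∧
    (e s + e t - e k) + ((0 : ℝ) • (e k - e t) + (-1 : ℝ) • (e s - e k)) = e t :=
  stmt_13_general k s t

end Markov
end

section
/- Let W ∈ 𝓜 be a branch word. Then for every Y ∈ 𝓜: (i) g_K^{WY} ∈ C°(g_S^W, g_T^W, v_SK^W, v_TK^W), i.e. g_K^{WY} is a strictly positive linear combination of g_S^W, g_T^W, v_SK^W, v_TK^W; and (ii) for every M ∈ {K,S,T}, g_M^{WY} belongs to the set U^W := C°(g_S^W, g_T^W, v_SK^W, v_TK^W) ∪ C(g_S^W, g_T^W). -/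
namespace Markov

lemma trunk_false {W : Word} (hW : ¬ IsTrunk W) (Z : Word) :
    trunkB (Z ++ W.reverse) = false := by
  unfold IsTrunk at hW
  push_neg at hW
  obtain ⟨l, hl, hne⟩ := hW
  unfold trunkB
  rw [List.all_eq_false]
  exact ⟨l, by simpa using Or.inr hl, by simpa using hne⟩

lemma key16 (k s t : Fin 3) (W : Word) (hW : ¬ IsTrunk W) :
    ∀ Z : Word,
      (gRev k s t (Z ++ W.reverse)).1 ∈ Uo k s t W ∧
      (gRev k s t (Z ++ W.reverse)).2.1 ∈ Uset k s t W ∧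
      (gRev k s t (Z ++ W.reverse)).2.2 ∈ Uset k s t W ∧
      (∃ a b c d : ℝ, 0 ≤ a ∧ 0 ≤ b ∧ 0 ≤ c ∧ 0 ≤ d ∧
        (gRev k s t (Z ++ W.reverse)).1 - (gRev k s t (Z ++ W.reverse)).2.1 =
          a • (g k s t W).2.1 + b • (g k s t W).2.2 + c • vSK k s t W + d • vTK k s t W) ∧
      (∃ a b c d : ℝ, 0 ≤ a ∧ 0 ≤ b ∧ 0 ≤ c ∧ 0 ≤ d ∧
        (gRev k s t (Z ++ W.reverse)).1 - (gRev k s t (Z ++ W.reverse)).2.2 =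
          a • (g k s t W).2.1 + b • (g k s t W).2.2 + c • vSK k s t W + d • vTK k s t W) := by
  intro Z
  induction Z with
  | nil =>
    have hg : gRev k s t ([] ++ W.reverse) = g k s t W := rfl
    rw [hg]
    refine ⟨?_, Or.inr ⟨1, 0, by norm_num, by norm_num, by module⟩,
      Or.inr ⟨0, 1, by norm_num, by norm_num, by module⟩,
      ⟨0, 0, 1, 0, by norm_num, by norm_num, by norm_num, by norm_num, ?_⟩,
      ⟨0, 0, 0, 1, by norm_num, by norm_num, by norm_num, by norm_num, ?_⟩⟩
    · simp only [Uo, C4o, Set.mem_setOf_eq]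
      refine ⟨1/2, 1/2, 1/2, 1/2, by norm_num, by norm_num, by norm_num, by norm_num, ?_⟩
      unfold vSK vTK; module
    · unfold vSK vTK; module
    · unfold vSK vTK; module
  | cons l Z ih =>
    obtain ⟨hK, hS, hT, ⟨a1, b1, c1, d1, ha1, hb1, hc1, hd1, hD1⟩,
      ⟨a2, b2, c2, d2, ha2, hb2, hc2, hd2, hD2⟩⟩ := ih
    have hKq := hK
    simp only [Uo, C4o, Set.mem_setOf_eq] at hKq
    obtain ⟨a, b, c, d, ha, hb, hc, hd, hKeq⟩ := hKq
    set p := gRev k s t (Z ++ W.reverse) with hp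
    have hstep : gRev k s t ((l :: Z) ++ W.reverse) = gStep false l p := by
      rw [List.cons_append]
      show gStep (trunkB (Z ++ W.reverse)) l (gRev k s t (Z ++ W.reverse)) = _
      rw [trunk_false hW]
    rw [hstep]
    have htwo : ∀ x : V3, (2 : ℕ) • x = x + x := fun x => two_nsmul x
    cases l with
    | S =>
      simp only [gStep]
      refine ⟨?_, Or.inl hK, hT, ⟨a1, b1, c1, d1, ha1, hb1, hc1, hd1, ?_⟩,
        ⟨a1 + a2, b1 + b2, c1 + c2, d1 + d2, by linarith, by linarith, by linarith,
          by linarith, ?_⟩⟩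
      · simp only [Uo, C4o, Set.mem_setOf_eq]
        refine ⟨a + a1, b + b1, c + c1, d + d1, by linarith, by linarith, by linarith,
          by linarith, ?_⟩
        have h2 : (2 : ℕ) • p.1 - p.2.1 = p.1 + (p.1 - p.2.1) := by rw [htwo]; abel
        rw [h2, hD1, hKeq]; module
      · have h2 : (2 : ℕ) • p.1 - p.2.1 - p.1 = p.1 - p.2.1 := by rw [htwo]; abel
        rw [h2]; exact hD1
      · have h2 : (2 : ℕ) • p.1 - p.2.1 - p.2.2 = (p.1 - p.2.1) + (p.1 - p.2.2) := by
          rw [htwo]; abel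
        rw [h2, hD1, hD2]; module
    | T =>
      simp only [gStep, if_neg (Bool.false_ne_true)]
      refine ⟨?_, Or.inl hK, hS, ⟨a2, b2, c2, d2, ha2, hb2, hc2, hd2, ?_⟩,
        ⟨a1 + a2, b1 + b2, c1 + c2, d1 + d2, by linarith, by linarith, by linarith,
          by linarith, ?_⟩⟩
      · simp only [Uo, C4o, Set.mem_setOf_eq]
        refine ⟨a + a2, b + b2, c + c2, d + d2, by linarith, by linarith, by linarith,
          by linarith, ?_⟩
        have h2 : (2 : ℕ) • p.1 - p.2.2 = p.1 + (p.1 - p.2.2) := by rw [htwo]; abel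
        rw [h2, hD2, hKeq]; module
      · have h2 : (2 : ℕ) • p.1 - p.2.2 - p.1 = p.1 - p.2.2 := by rw [htwo]; abel
        rw [h2]; exact hD2
      · have h2 : (2 : ℕ) • p.1 - p.2.2 - p.2.1 = (p.1 - p.2.2) + (p.1 - p.2.1) := by
          rw [htwo]; abel
        rw [h2, hD2, hD1]; module

/-- upper bound `U^W` for the g-vectors of a branch. -/
theorem stmt_16 (k s t : Fin 3) (hks : k ≠ s) (hkt : k ≠ t) (hst : s ≠ t)
    (W : Word) (hW : ¬ IsTrunk W) :
    ∀ Y : Word,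
      (g k s t (W ++ Y)).1 ∈ Uo k s t W ∧
      (g k s t (W ++ Y)).1 ∈ Uset k s t W ∧
      (g k s t (W ++ Y)).2.1 ∈ Uset k s t W ∧
      (g k s t (W ++ Y)).2.2 ∈ Uset k s t W := by
  intro Y
  have hg : g k s t (W ++ Y) = gRev k s t (Y.reverse ++ W.reverse) := by
    simp [g, List.reverse_append]
  obtain ⟨h1, h2, h3, _, _⟩ := key16 k s t W hW Y.reverse
  rw [hg]
  exact ⟨h1, Or.inl h1, h2, h3⟩


end Markov
end
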